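/- arXiv:1912.10989 — 2 statements merged into one kernel-verified Lean document; each statement's English description precedes it below -/
import Mathlib

section
/- Let G be a finite connected simple graph, W an edge clique cover of G, and C a block of G. Let {W1, W2, Wo} be a partition of W into good parts with W1 ∪ W2 ⊆ W[C], and let C' be a block of G that is a component of the part Wo with N(C') = N(C). Set Ω = V(G) \ V(G, W1, W2, Wo). If H is any graph with V(H) = N[C] and E(H) equal to the set of all pairs inside Ω together with the union of E(H_i) over all C_i in C(W1) ∪ C(W2) ∪ (C(Wo) minus the set of connected components of G \ N(C)), where each H_i is any triangulation of R(C_i), then H is a triangulation of the realization R(C). -/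
/-!
Let `Ω = V \ V(G, W1, W2, Wo)`. No edge of `G` joins the vertex sets of two disjoint parts (its
covering clique would lie in both), so every component `Cᵢ` of `W1`, `W2` or `Wo` is a component
of `G \ Ω`; in particular `N(Cᵢ) ⊆ Ω`, and `N(C) = N(C') ⊆ Ω`. Hence `H` is obtained by gluing
the chordal graphs `Hᵢ` onto the clique `Ω` along the cliques `N(Cᵢ)`, which keeps it chordal.
Every edge of `R(C)` lies in `Ω` or has an end in some `Cᵢ`, where it is an edge of `R(Cᵢ)`.
Everything stays inside `N[C]` because each clique outside `Wo` meets `C`, and a component of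
`Wo` not contained in `C` would be a component of `G \ N(C)` and is excluded; conversely `C`
itself is no component of `Wo`, as a clique of `W1` meets it.
-/

open scoped Classical

namespace PaperECC

variable {V : Type*}

/-- `nbhd G X` is N(X): vertices outside `X` with a neighbor in `X`. -/
def nbhd (G : SimpleGraph V) (X : Set V) : Set V :=
  {v | v ∉ X ∧ ∃ u ∈ X, G.Adj u v}

/-- `closedNbhd G X` is N[X] = X ∪ N(X). -/
def closedNbhd (G : SimpleGraph V) (X : Set V) : Set V :=
  X ∪ nbhd G X

/-- closed neighborhood N[v] of a single vertex. -/
def vNbhd (G : SimpleGraph V) (v : V) : Set V :=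
  insert v (G.neighborSet v)

/-- `IsCompOf G X C`: `C` is the vertex set of a connected component of `G \ X`. -/
def IsCompOf (G : SimpleGraph V) (X C : Set V) : Prop :=
  C.Nonempty ∧ Disjoint C X ∧ (G.induce C).Connected ∧
    ∀ u ∈ C, ∀ v, v ∉ X → G.Adj u v → v ∈ C

/-- `C` is a full component of `X`: a component of `G \ X` with N(C) = X. -/
def IsFullCompOf (G : SimpleGraph V) (X C : Set V) : Prop :=
  IsCompOf G X C ∧ nbhd G C = X

/-- `S` is a minimal separator of `G`: it has at least two full components. -/
def IsMinSep (G : SimpleGraph V) (S : Set V) : Prop :=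
  ∃ C D : Set V, C ≠ D ∧ IsFullCompOf G S C ∧ IsFullCompOf G S D

/-- `C` is a block of `G`: a component of `G \ N(C)` whose neighborhood is a minimal separator. -/
def IsBlock (G : SimpleGraph V) (C : Set V) : Prop :=
  IsCompOf G (nbhd G C) C ∧ IsMinSep G (nbhd G C)

/-- `H` is chordal: every (injectively embedded) cycle on at least 4 vertices has a chord,
i.e. there is no induced cycle on four or more vertices. -/
def IsChordal (H : SimpleGraph V) : Prop :=
  ∀ n : ℕ, 4 ≤ n → ∀ f : ZMod n → V, Function.Injective f →
    (∀ i, H.Adj (f i) (f (i + 1))) →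
    ∃ i j : ZMod n, i ≠ j ∧ j ≠ i + 1 ∧ i ≠ j + 1 ∧ H.Adj (f i) (f j)

/-- `H` is a triangulation of `G` (on the same vertex set). -/
def IsTri (G H : SimpleGraph V) : Prop :=
  IsChordal H ∧ G ≤ H

/-- `H` is a minimal triangulation of `G`. -/
def IsMinTri (G H : SimpleGraph V) : Prop :=
  IsTri G H ∧ ∀ H' : SimpleGraph V, IsTri G H' → H' ≤ H → H' = H

/-- `Ω` is a maximal clique of `H`. -/
def IsMaxClique (H : SimpleGraph V) (Ω : Set V) : Prop :=
  H.IsClique Ω ∧ ∀ Ω' : Set V, H.IsClique Ω' → Ω ⊆ Ω' → Ω' = Ω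

/-- `Ω` is a potential maximal clique of `G`: a maximal clique of some minimal triangulation. -/
def IsPMC (G : SimpleGraph V) (Ω : Set V) : Prop :=
  ∃ H : SimpleGraph V, IsMinTri G H ∧ IsMaxClique H Ω

/-- `W` is an edge clique cover of `G`: a finite collection of cliques covering all edges. -/
def IsECC (G : SimpleGraph V) (W : Finset (Set V)) : Prop :=
  (∀ K ∈ W, G.IsClique K) ∧ ∀ u v : V, G.Adj u v → ∃ K ∈ W, u ∈ K ∧ v ∈ K

/-- `W[X]`: the cliques of `W` intersecting the vertex set `X`. -/
noncomputable def meeting (W : Finset (Set V)) (X : Set V) : Finset (Set V) :=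
  W.filter (fun K => (K ∩ X).Nonempty)

/-- `V(G, W')`: the vertices all of whose cliques (within `W`) belong to `W'`. -/
def partVerts (W W' : Finset (Set V)) : Set V :=
  {v | ∀ K ∈ W, v ∈ K → K ∈ W'}

/-- The connected components of the subgraph of `G` induced on a vertex set `Y`. -/
def compsOf (G : SimpleGraph V) (Y : Set V) : Set (Set V) :=
  {C | IsCompOf G Yᶜ C}

/-- `C(W')`: the components of the part `W'` of the edge clique cover `W`. -/
def partComps (G : SimpleGraph V) (W W' : Finset (Set V)) : Set (Set V) :=
  compsOf G (partVerts W W')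

/-- `W'` is a good part of `W`: a nonempty subset all of whose components are blocks of `G`. -/
def IsGoodPart (G : SimpleGraph V) (W W' : Finset (Set V)) : Prop :=
  W' ⊆ W ∧ W'.Nonempty ∧ ∀ C ∈ partComps G W W', IsBlock G C

/-- The realization `R(C)` of a block `C`, as a graph supported on `N[C]`:
edges of `G[N[C]]` together with all pairs inside `N(C)`. -/
def realization (G : SimpleGraph V) (C : Set V) : SimpleGraph V where
  Adj u v := u ≠ v ∧ u ∈ closedNbhd G C ∧ v ∈ closedNbhd G C ∧
    (G.Adj u v ∨ (u ∈ nbhd G C ∧ v ∈ nbhd G C))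
  symm := by
    constructor
    intro u v h
    exact ⟨h.1.symm, h.2.2.1, h.2.1, h.2.2.2.elim (fun a => Or.inl a.symm)
      (fun a => Or.inr ⟨a.2, a.1⟩)⟩
  loopless := ⟨fun u h => h.1 rfl⟩

/-- The complete graph on the vertex set `Ω` (supported on `Ω`): all pairs inside `Ω`. -/
def cliqueOn (Ω : Set V) : SimpleGraph V where
  Adj u v := u ≠ v ∧ u ∈ Ω ∧ v ∈ Ω
  symm := ⟨fun u v h => ⟨h.1.symm, h.2.2, h.2.1⟩⟩
  loopless := ⟨fun u h => h.1 rfl⟩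

/-- The induced subgraph `G[A]`, as a graph supported on `A`. -/
def inducedOn (G : SimpleGraph V) (A : Set V) : SimpleGraph V where
  Adj u v := G.Adj u v ∧ u ∈ A ∧ v ∈ A
  symm := ⟨fun u v h => ⟨h.1.symm, h.2.2, h.2.1⟩⟩
  loopless := ⟨fun u h => G.loopless.irrefl u h.1⟩

/-- All edges of `H` lie inside the vertex set `A` (i.e. `H` has vertex set `A`). -/
def edgesWithin (H : SimpleGraph V) (A : Set V) : Prop :=
  ∀ u v : V, H.Adj u v → u ∈ A ∧ v ∈ A

/-- `H` is a triangulation of the graph `G'` with vertex set `A`. -/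
def IsTriOn (G' : SimpleGraph V) (A : Set V) (H : SimpleGraph V) : Prop :=
  IsChordal H ∧ G' ≤ H ∧ edgesWithin H A

/-- `H` is a minimal triangulation of the graph `G'` with vertex set `A`. -/
def IsMinTriOn (G' : SimpleGraph V) (A : Set V) (H : SimpleGraph V) : Prop :=
  IsTriOn G' A H ∧ ∀ H' : SimpleGraph V, IsTriOn G' A H' → H' ≤ H → H' = H

/-- `M` is a module of `G`. -/
def IsModule (G : SimpleGraph V) (M : Set V) : Prop :=
  ∀ v ∉ M, (∀ u ∈ M, G.Adj v u) ∨ (∀ u ∈ M, ¬ G.Adj v u)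

section Components

variable {G : SimpleGraph V} {X D : Set V}

lemma IsCompOf.subset_of_connected (hD : IsCompOf G X D) {A : Set V}
    (hA : (G.induce A).Connected) (hAX : Disjoint A X) {x : V} (hxA : x ∈ A) (hxD : x ∈ D) :
    A ⊆ D := by
  intro u hu
  obtain ⟨p⟩ := hA.preconnected ⟨x, hxA⟩ ⟨u, hu⟩
  suffices ∀ {a b : A}, (G.induce A).Walk a b → a.1 ∈ D → b.1 ∈ D from this p hxD
  intro a b p
  induction p with
  | nil => exact id
  | cons h _ ih =>
    exact fun ha => ih (hD.2.2.2 _ ha _ (Set.disjoint_left.mp hAX (Subtype.prop _)) h)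

lemma IsCompOf.eq_of_mem {D' : Set V} (hD : IsCompOf G X D) (hD' : IsCompOf G X D') {x : V}
    (hx : x ∈ D) (hx' : x ∈ D') : D = D' :=
  (hD'.subset_of_connected hD.2.2.1 hD.2.1 hx hx').antisymm
    (hD.subset_of_connected hD'.2.2.1 hD'.2.1 hx' hx)

lemma pairwiseDisjoint_of_isCompOf {I : Set (Set V)} (hI : ∀ D ∈ I, IsCompOf G X D) :
    I.PairwiseDisjoint id := fun D hD D' hD' hDD' =>
  Set.disjoint_left.mpr fun _ hx hx' => hDD' ((hI D hD).eq_of_mem (hI D' hD') hx hx')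

/-- The component of `v` is the union of all connected sets containing `v` and avoiding `X`. -/
lemma exists_isCompOf_mem (G : SimpleGraph V) {v : V} (hv : v ∉ X) :
    ∃ D, IsCompOf G X D ∧ v ∈ D := by
  set S := {s : Set V | Disjoint s X ∧ v ∈ s ∧ (G.induce s).Connected}
  have hvS : {v} ∈ S := ⟨Set.disjoint_singleton_left.mpr hv, rfl, ⟨.of_subsingleton⟩⟩
  refine ⟨⋃₀ S, ⟨⟨v, {v}, hvS, rfl⟩, Set.disjoint_sUnion_left.mpr fun s hs => hs.1,
    SimpleGraph.induce_sUnion_connected_of_pairwise_not_disjoint ⟨_, hvS⟩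
      (fun hs ht => ⟨v, hs.2.1, ht.2.1⟩) (fun hs => hs.2.2), ?_⟩, {v}, hvS, rfl⟩
  rintro u ⟨s, hs, hus⟩ w hw huw
  refine ⟨s ∪ {u, w}, ⟨?_, Or.inl hs.2.1, ?_⟩, Or.inr (Or.inr rfl)⟩
  · exact Set.disjoint_union_left.mpr ⟨hs.1, Set.disjoint_insert_left.mpr
      ⟨Set.disjoint_left.mp hs.1 hus, Set.disjoint_singleton_left.mpr hw⟩⟩
  · exact SimpleGraph.induce_union_connected hs.2.2.preconnected
      (SimpleGraph.induce_pair_connected_of_adj huw).preconnected ⟨u, hus, Or.inl rfl⟩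

lemma IsCompOf.nbhd_subset (hD : IsCompOf G X D) : nbhd G D ⊆ X := by
  rintro v ⟨hvD, u, hu, huv⟩
  by_contra hvX
  exact hvD (hD.2.2.2 u hu v hvX huv)

lemma IsCompOf.of_disjoint (hD : IsCompOf G X D) {X' : Set V} (hDX' : Disjoint D X')
    (hclosed : ∀ u ∈ D, ∀ v ∉ X', G.Adj u v → v ∉ X) : IsCompOf G X' D :=
  ⟨hD.1, hDX', hD.2.2.1, fun u hu v hv huv => hD.2.2.2 u hu v (hclosed u hu v hv huv) huv⟩

lemma IsCompOf.of_compl_subset {A Y : Set V} (hD : IsCompOf G Aᶜ D) (hAY : A ⊆ Y)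
    (hclosed : ∀ u ∈ A, ∀ v ∈ Y, G.Adj u v → v ∈ A) : IsCompOf G Yᶜ D := by
  have hDA : D ⊆ A := Set.disjoint_compl_right_iff_subset.mp hD.2.1
  refine hD.of_disjoint (Set.disjoint_compl_right_iff_subset.mpr (hDA.trans hAY)) ?_
  intro u hu v hv huv
  exact Set.notMem_compl_iff.mpr (hclosed u (hDA hu) v (Set.notMem_compl_iff.mp hv) huv)

lemma IsCompOf.subset_or_isCompOf {S P C : Set V} (hC : IsCompOf G S C) (hD : IsCompOf G Pᶜ D)
    (hSP : S ⊆ Pᶜ) (hP : (C ∪ S)ᶜ ⊆ P) : D ⊆ C ∨ IsCompOf G S D := by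
  obtain ⟨v, hv⟩ := hD.1
  have hDS : Disjoint D S := hD.2.1.mono_right hSP
  obtain ⟨D', hD', hvD'⟩ := exists_isCompOf_mem G (Set.disjoint_left.mp hDS hv)
  have hDD' : D ⊆ D' := hD'.subset_of_connected hD.2.2.1 hDS hv hvD'
  by_cases hCD' : C = D'
  · exact Or.inl (hCD' ▸ hDD')
  right
  have hD'P : Disjoint D' Pᶜ := by
    refine Set.disjoint_compl_right_iff_subset.mpr fun x hx => hP ?_
    rintro (hxC | hxS)
    · exact hCD' (hC.eq_of_mem hD' hxC hx)
    · exact Set.disjoint_left.mp hD'.2.1 hx hxS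
  have hD'comp : IsCompOf G Pᶜ D' :=
    hD'.of_disjoint hD'P fun _ _ x hx _ hxS => hx (hSP hxS)
  rwa [hD.eq_of_mem hD'comp hv (hDD' hv)]

end Components

section CyclicIndices

variable {n : ℕ}

lemma natCast_ne_zero_of_lt {m : ℕ} (hm : 0 < m) (hmn : m < n) : (m : ZMod n) ≠ 0 := by
  rw [Ne, ZMod.natCast_eq_zero_iff]
  exact fun h => (Nat.le_of_dvd hm h).not_gt hmn

lemma add_natCast_ne_self {m : ℕ} (hm : 0 < m) (hmn : m < n) (x : ZMod n) : x + m ≠ x :=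
  fun h => natCast_ne_zero_of_lt hm hmn (by linear_combination h)

lemma exists_subset_pair_of_pairwise_adjacent (hn : 4 ≤ n) (P : Set (ZMod n))
    (hP : ∀ i ∈ P, ∀ j ∈ P, i = j ∨ j = i + 1 ∨ i = j + 1) : ∃ k, P ⊆ {k, k + 1} := by
  have h1 : (1 : ZMod n) ≠ 0 := by
    exact_mod_cast natCast_ne_zero_of_lt (m := 1) (by omega) (by omega)
  have h2 : (2 : ZMod n) ≠ 0 := by
    exact_mod_cast natCast_ne_zero_of_lt (m := 2) (by omega) (by omega)
  have h3 : (3 : ZMod n) ≠ 0 := by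
    exact_mod_cast natCast_ne_zero_of_lt (m := 3) (by omega) (by omega)
  rcases P.eq_empty_or_nonempty with rfl | ⟨p, hp⟩
  · exact ⟨0, Set.empty_subset _⟩
  by_cases hp1 : p + 1 ∈ P
  · refine ⟨p, fun i hi => ?_⟩
    rcases hP p hp i hi with h | h | hpi
    · exact Or.inl h.symm
    · exact Or.inr h
    · exfalso
      rcases hP (p + 1) hp1 i hi with h | h | h
      · exact h2 (by linear_combination h - hpi)
      · exact h3 (by linear_combination -h - hpi)
      · exact h1 (by linear_combination h - hpi)
  · refine ⟨p - 1, fun i hi => ?_⟩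
    rcases hP p hp i hi with h | h | h
    · exact Or.inr (by rw [← h, sub_add_cancel]; rfl)
    · exact absurd (h ▸ hi) hp1
    · exact Or.inl (by rw [h, add_sub_cancel_right])

lemma forall_of_add_one [NeZero n] {P : ZMod n → Prop} {k : ZMod n} (h0 : P (k + 2))
    (hstep : ∀ i, P i → i + 1 ≠ k → i + 1 ≠ k + 1 → P (i + 1))
    (i : ZMod n) (hik : i ≠ k) (hik1 : i ≠ k + 1) : P i := by
  have key : ∀ t : ℕ, t + 2 < n → P (k + 2 + t) := by
    intro t
    induction t with
    | zero => intro _; simpa using h0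
    | succ t ih =>
      intro ht
      have := hstep _ (ih (by omega))
        (fun h => add_natCast_ne_self (m := t + 3) (by omega) (by omega) k
          (by push_cast; linear_combination h))
        (fun h => add_natCast_ne_self (m := t + 2) (by omega) (by omega) (k + 1)
          (by push_cast; linear_combination h))
      simpa [add_assoc] using this
  set t := (i - (k + 2)).val
  have ht : (t : ZMod n) = i - (k + 2) := ZMod.natCast_zmod_val _
  have htn : t + 2 < n := by
    by_contra hle
    have : t + 1 = n ∨ t + 2 = n := by have := ZMod.val_lt (i - (k + 2)); omega
    rcases this with h | h <;> have h' := congrArg (Nat.cast : ℕ → ZMod n) h <;>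
      push_cast [ZMod.natCast_self, ht] at h'
    exacts [hik1 (by linear_combination h'), hik (by linear_combination h')]
  simpa [ht] using key t htn

end CyclicIndices

section Gluing

variable {ι : Type*} {Ω : Set V} {I : Set ι} {F : ι → SimpleGraph V}

lemma adj_cliqueOn_sup_iSup_iff {u v : V} :
    (cliqueOn Ω ⊔ ⨆ i ∈ I, F i).Adj u v ↔ (u ≠ v ∧ u ∈ Ω ∧ v ∈ Ω) ∨ ∃ i ∈ I, (F i).Adj u v := by
  simp only [SimpleGraph.sup_adj, SimpleGraph.iSup_adj, exists_prop]
  rfl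

lemma edgesWithin_cliqueOn_sup_iSup {A : Set V} (hΩ : Ω ⊆ A) (hF : ∀ i ∈ I, edgesWithin (F i) A) :
    edgesWithin (cliqueOn Ω ⊔ ⨆ i ∈ I, F i) A := by
  intro u v huv
  rcases adj_cliqueOn_sup_iSup_iff.mp huv with ⟨-, hu, hv⟩ | ⟨i, hi, huv⟩
  · exact ⟨hΩ hu, hΩ hv⟩
  · exact hF i hi u v huv

variable {C S : ι → Set V}

lemma exists_mem_of_adj_cliqueOn_sup_iSup (hSΩ : ∀ i ∈ I, S i ⊆ Ω)
    (hFe : ∀ i ∈ I, edgesWithin (F i) (C i ∪ S i)) {u v : V}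
    (huv : (cliqueOn Ω ⊔ ⨆ i ∈ I, F i).Adj u v) (hu : u ∉ Ω) :
    ∃ i ∈ I, u ∈ C i ∧ (F i).Adj u v := by
  rcases adj_cliqueOn_sup_iSup_iff.mp huv with ⟨-, hu', -⟩ | ⟨i, hi, huv⟩
  · exact absurd hu' hu
  · exact ⟨i, hi, (hFe i hi u v huv).1.resolve_right fun h => hu (hSΩ i hi h), huv⟩

lemma adj_of_adj_cliqueOn_sup_iSup (hC : I.PairwiseDisjoint C)
    (hCΩ : ∀ i ∈ I, Disjoint (C i) Ω) (hSΩ : ∀ i ∈ I, S i ⊆ Ω)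
    (hFe : ∀ i ∈ I, edgesWithin (F i) (C i ∪ S i)) {u v : V}
    (huv : (cliqueOn Ω ⊔ ⨆ i ∈ I, F i).Adj u v) {a : ι} (ha : a ∈ I) (hu : u ∈ C a) :
    (F a).Adj u v := by
  obtain ⟨i, hi, hui, huv⟩ := exists_mem_of_adj_cliqueOn_sup_iSup hSΩ hFe huv
    (Set.disjoint_left.mp (hCΩ a ha) hu)
  rwa [hC.elim_set hi ha u hui hu] at huv

lemma adj_of_adj_cliqueOn_sup_iSup_of_mem (hC : I.PairwiseDisjoint C)
    (hCΩ : ∀ i ∈ I, Disjoint (C i) Ω) (hSΩ : ∀ i ∈ I, S i ⊆ Ω)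
    (hFe : ∀ i ∈ I, edgesWithin (F i) (C i ∪ S i)) (hFS : ∀ i ∈ I, cliqueOn (S i) ≤ F i)
    {u v : V} (huv : (cliqueOn Ω ⊔ ⨆ i ∈ I, F i).Adj u v) {a : ι} (ha : a ∈ I)
    (hu : u ∈ C a ∪ S a) (hv : v ∈ C a ∪ S a) : (F a).Adj u v := by
  rcases hu with hu | hu
  · exact adj_of_adj_cliqueOn_sup_iSup hC hCΩ hSΩ hFe huv ha hu
  rcases hv with hv | hv
  · exact (adj_of_adj_cliqueOn_sup_iSup hC hCΩ hSΩ hFe huv.symm ha hv).symm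
  · exact hFS a ha ⟨huv.ne, hu, hv⟩

/-- Chordless cycles of the glued graph meet `Ω` in at most two consecutive vertices, so all
their other vertices lie in a single piece `C a`; the cycle then lives in `F a`, where the
`Ω`-edge is present because `S a` is a clique of `F a`. -/
theorem isChordal_cliqueOn_sup_iSup (hC : I.PairwiseDisjoint C)
    (hCΩ : ∀ i ∈ I, Disjoint (C i) Ω) (hSΩ : ∀ i ∈ I, S i ⊆ Ω)
    (hF : ∀ i ∈ I, IsChordal (F i)) (hFe : ∀ i ∈ I, edgesWithin (F i) (C i ∪ S i))
    (hFS : ∀ i ∈ I, cliqueOn (S i) ≤ F i) :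
    IsChordal (cliqueOn Ω ⊔ ⨆ i ∈ I, F i) := by
  set H := cliqueOn Ω ⊔ ⨆ i ∈ I, F i
  intro n hn f hf hcyc
  have : NeZero n := ⟨by omega⟩
  have h1 : (1 : ZMod n) ≠ 0 := by
    exact_mod_cast natCast_ne_zero_of_lt (m := 1) (by omega) (by omega)
  have h2 : (2 : ZMod n) ≠ 0 := by
    exact_mod_cast natCast_ne_zero_of_lt (m := 2) (by omega) (by omega)
  by_contra! hchordless
  have hF_le : ∀ i ∈ I, F i ≤ H := fun i hi => le_sup_of_le_right (le_biSup F hi)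
  obtain ⟨k, hk⟩ := exists_subset_pair_of_pairwise_adjacent hn {i | f i ∈ Ω} fun i hi j hj => by
    by_contra! h
    exact hchordless i j h.1 h.2.1 h.2.2 (Or.inl ⟨hf.ne h.1, hi, hj⟩)
  have hfΩ : ∀ i, i ≠ k → i ≠ k + 1 → f i ∉ Ω := fun i hik hik1 hi =>
    (hk hi).elim hik hik1
  obtain ⟨a, ha, hfa, -⟩ := exists_mem_of_adj_cliqueOn_sup_iSup hSΩ hFe (hcyc (k + 2))
    (hfΩ _ (fun h => h2 (by linear_combination h)) (fun h => h1 (by linear_combination h)))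
  have hmem : ∀ {u v}, H.Adj u v → u ∈ C a → v ∈ C a ∪ S a := fun huv hu =>
    (hFe a ha _ _ (adj_of_adj_cliqueOn_sup_iSup hC hCΩ hSΩ hFe huv ha hu)).2
  have hCa : ∀ i, i ≠ k → i ≠ k + 1 → f i ∈ C a :=
    forall_of_add_one hfa fun i hi hik hik1 => (hmem (hcyc i) hi).resolve_right
      fun h => hfΩ _ hik hik1 (hSΩ a ha h)
  have hCa_prev : f (k - 1) ∈ C a := hCa _ (fun h => h1 (by linear_combination -h))
    (fun h => h2 (by linear_combination -h))
  have hvert : ∀ i, f i ∈ C a ∪ S a := by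
    intro i
    by_cases hik : i = k
    · simpa [hik] using hmem (hcyc (k - 1)) hCa_prev
    by_cases hik1 : i = k + 1
    · have := hmem (hcyc (k + 1)).symm (by convert hfa using 2; ring)
      rwa [hik1]
    exact Or.inl (hCa i hik hik1)
  have hcycF : ∀ i, (F a).Adj (f i) (f (i + 1)) := fun i =>
    adj_of_adj_cliqueOn_sup_iSup_of_mem hC hCΩ hSΩ hFe hFS (hcyc i) ha (hvert i) (hvert (i + 1))
  obtain ⟨i, j, hij, hji1, hij1, hF_ij⟩ := hF a ha n hn f hf hcycF
  exact hchordless i j hij hji1 hij1 (hF_le a ha hF_ij)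

end Gluing

section Realization

variable {G : SimpleGraph V} {C : Set V}

lemma realization_adj_of_adj {u v : V} (hu : u ∈ C) (huv : G.Adj u v) :
    (realization G C).Adj u v := by
  refine ⟨huv.ne, Or.inl hu, ?_, Or.inl huv⟩
  by_cases hv : v ∈ C
  · exact Or.inl hv
  · exact Or.inr ⟨hv, u, hu, huv⟩

lemma cliqueOn_nbhd_le_realization : cliqueOn (nbhd G C) ≤ realization G C :=
  fun _ _ ⟨huv, hu, hv⟩ => ⟨huv, Or.inr hu, Or.inr hv, Or.inr ⟨hu, hv⟩⟩

lemma edgesWithin.mono {H : SimpleGraph V} {A B : Set V} (h : edgesWithin H A) (hAB : A ⊆ B) :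
    edgesWithin H B :=
  fun u v huv => (h u v huv).imp (@hAB _) (@hAB _)

lemma realization_le_cliqueOn_sup_iSup {Ω : Set V} {I : Set (Set V)} {F : Set V → SimpleGraph V}
    (hNΩ : nbhd G C ⊆ Ω) (hcover : ∀ u ∈ closedNbhd G C, u ∉ Ω → ∃ D ∈ I, u ∈ D)
    (hF : ∀ D ∈ I, realization G D ≤ F D) :
    realization G C ≤ cliqueOn Ω ⊔ ⨆ D ∈ I, F D := by
  have hG_adj : ∀ {u v}, G.Adj u v → u ∈ closedNbhd G C → u ∉ Ω →
      (cliqueOn Ω ⊔ ⨆ D ∈ I, F D).Adj u v := by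
    intro u v huv hu huΩ
    obtain ⟨D, hD, huD⟩ := hcover u hu huΩ
    exact le_sup_of_le_right (le_biSup F hD) (hF D hD (realization_adj_of_adj huD huv))
  rintro u v ⟨huv, hu, hv, hG | ⟨huN, hvN⟩⟩
  · by_cases huΩ : u ∈ Ω
    · by_cases hvΩ : v ∈ Ω
      · exact Or.inl ⟨huv, huΩ, hvΩ⟩
      · exact (hG_adj hG.symm hv hvΩ).symm
    · exact hG_adj hG hu huΩ
  · exact Or.inl ⟨huv, hNΩ huN, hNΩ hvN⟩

theorem isTriOn_realization_cliqueOn_sup_iSup {Ω : Set V} {I : Set (Set V)}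
    {F : Set V → SimpleGraph V} (hI : ∀ D ∈ I, IsCompOf G Ω D)
    (hF : ∀ D ∈ I, IsTriOn (realization G D) (closedNbhd G D) (F D))
    (hNΩ : nbhd G C ⊆ Ω) (hΩC : Ω ⊆ closedNbhd G C) (hIC : ∀ D ∈ I, D ⊆ closedNbhd G C)
    (hcover : ∀ u ∈ closedNbhd G C, u ∉ Ω → ∃ D ∈ I, u ∈ D) :
    IsTriOn (realization G C) (closedNbhd G C) (cliqueOn Ω ⊔ ⨆ D ∈ I, F D) :=
  ⟨isChordal_cliqueOn_sup_iSup (C := id) (S := nbhd G) (pairwiseDisjoint_of_isCompOf hI)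
      (fun D hD => (hI D hD).2.1) (fun D hD => (hI D hD).nbhd_subset) (fun D hD => (hF D hD).1)
      (fun D hD => (hF D hD).2.2) (fun D hD => cliqueOn_nbhd_le_realization.trans (hF D hD).2.1),
    realization_le_cliqueOn_sup_iSup hNΩ hcover fun D hD => (hF D hD).2.1,
    edgesWithin_cliqueOn_sup_iSup hΩC fun D hD => (hF D hD).2.2.mono
      (Set.union_subset (hIC D hD) ((hI D hD).nbhd_subset.trans hΩC))⟩

end Realization

section EdgeCliqueCover

variable {G : SimpleGraph V} {W : Finset (Set V)} {C : Set V}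

lemma IsMinSep.nontrivial {S : Set V} (h : IsMinSep G S) : Nontrivial V := by
  obtain ⟨D, D', hDD', hD, hD'⟩ := h
  obtain ⟨x, hx⟩ := hD.1.1
  obtain ⟨y, hy⟩ := hD'.1.1
  exact ⟨x, y, fun hxy => hDD' (hD.1.eq_of_mem hD'.1 hx (hxy ▸ hy))⟩

lemma IsECC.exists_mem [Nontrivial V] (hW : IsECC G W) (hG : G.Preconnected) (v : V) :
    ∃ K ∈ W, v ∈ K := by
  obtain ⟨u, hvu⟩ := hG.exists_adj_of_nontrivial v
  obtain ⟨K, hK, hvK, -⟩ := hW.2 v u hvu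
  exact ⟨K, hK, hvK⟩

lemma disjoint_partVerts {Wa Wb : Finset (Set V)} (hcov : ∀ v, ∃ K ∈ W, v ∈ K)
    (h : Disjoint Wa Wb) : Disjoint (partVerts W Wa) (partVerts W Wb) :=
  Set.disjoint_left.mpr fun v hva hvb => by
    obtain ⟨K, hK, hvK⟩ := hcov v
    exact Finset.disjoint_left.mp h (hva K hK hvK) (hvb K hK hvK)

lemma subset_compl_partVerts_of_mem_partComps {Wa Wb : Finset (Set V)}
    (hcov : ∀ v, ∃ K ∈ W, v ∈ K) (h : Disjoint Wa Wb) {D : Set V} (hD : D ∈ partComps G W Wa) :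
    D ⊆ (partVerts W Wb)ᶜ :=
  (Set.disjoint_compl_right_iff_subset.mp hD.2.1).trans
    (disjoint_partVerts hcov h).subset_compl_right

lemma IsECC.not_adj_of_mem_partVerts (hW : IsECC G W) {Wa Wb : Finset (Set V)}
    (h : Disjoint Wa Wb) {u v : V} (hu : u ∈ partVerts W Wa) (hv : v ∈ partVerts W Wb) :
    ¬G.Adj u v := fun huv => by
  obtain ⟨K, hK, huK, hvK⟩ := hW.2 u v huv
  exact Finset.disjoint_left.mp h (hu K hK huK) (hv K hK hvK)

lemma IsECC.mem_closedNbhd (hW : IsECC G W) {K : Set V} (hK : K ∈ meeting W C) {v : V}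
    (hv : v ∈ K) : v ∈ closedNbhd G C := by
  obtain ⟨hKW, c, hcK, hcC⟩ := Finset.mem_filter.mp hK
  by_cases hvC : v ∈ C
  · exact Or.inl hvC
  · exact Or.inr ⟨hvC, c, hcC, hW.1 K hKW hcK hv fun h => hvC (h ▸ hcC)⟩

lemma IsECC.compl_partVerts_subset_closedNbhd (hW : IsECC G W) {W' : Finset (Set V)}
    (h : W ⊆ meeting W C ∪ W') : (partVerts W W')ᶜ ⊆ closedNbhd G C := by
  intro v hv
  by_contra hvC
  exact hv fun K hK hvK => (Finset.mem_union.mp (h hK)).resolve_left fun hKC =>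
    hvC (hW.mem_closedNbhd hKC hvK)

lemma IsECC.isCompOf_compl_partVerts_union (hW : IsECC G W) {W1 W2 Wo : Finset (Set V)}
    (h12 : Disjoint W1 W2) (h1o : Disjoint W1 Wo) (h2o : Disjoint W2 Wo) {D : Set V}
    (hD : D ∈ partComps G W W1 ∪ partComps G W W2 ∪ partComps G W Wo) :
    IsCompOf G (partVerts W W1 ∪ partVerts W W2 ∪ partVerts W Wo)ᶜ D := by
  rcases hD with (hD | hD) | hD <;>
    refine hD.of_compl_subset (by intro; simp_all) ?_ <;>
    rintro u hu v ((hv | hv) | hv) huv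
  all_goals first
    | exact hv
    | exact absurd huv (hW.not_adj_of_mem_partVerts ‹_› hu hv)
    | exact absurd huv.symm (hW.not_adj_of_mem_partVerts ‹_› hv hu)

/-- Such a component would contain a vertex of `C`, hence be `C`; but `K` meets `C` outside
`V(G, Wo)`. -/
lemma not_isCompOf_nbhd_of_mem_partComps (hC : IsCompOf G (nbhd G C) C) {K : Set V}
    (hK : K ∈ meeting W C) {Wo : Finset (Set V)} (hKo : K ∉ Wo) {D : Set V}
    (hD : D ∈ partComps G W Wo) {u : V} (hu : u ∈ closedNbhd G C) (huD : u ∈ D) :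
    ¬IsCompOf G (nbhd G C) D := by
  intro hDN
  have huC : u ∈ C := hu.resolve_right (Set.disjoint_left.mp hDN.2.1 huD)
  obtain ⟨hKW, c, hcK, hcC⟩ := Finset.mem_filter.mp hK
  have hDo : D ⊆ partVerts W Wo := Set.disjoint_compl_right_iff_subset.mp hD.2.1
  rw [← hC.eq_of_mem hDN huC huD] at hDo
  exact hKo (hDo hcC K hKW hcK)

end EdgeCliqueCover

theorem tri_realization_soundness_general {V : Type*}
    (G : SimpleGraph V) (hG : G.Connected) (W : Finset (Set V)) (hW : IsECC G W)
    (C : Set V) (hC : IsBlock G C) (W1 W2 Wo : Finset (Set V))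
    (hpart : W1 ∪ W2 ∪ Wo = W) (h12 : Disjoint W1 W2) (h1o : Disjoint W1 Wo)
    (h2o : Disjoint W2 Wo)
    (hg1 : IsGoodPart G W W1)
    (hsub : W1 ∪ W2 ⊆ meeting W C)
    (C' : Set V) (hC'mem : C' ∈ partComps G W Wo)
    (hC'nb : nbhd G C' = nbhd G C)
    (F : Set V → SimpleGraph V)
    (hF : ∀ Ci ∈ partComps G W W1 ∪ partComps G W W2 ∪
        (partComps G W Wo \ {D : Set V | IsCompOf G (nbhd G C) D}),
      IsTriOn (realization G Ci) (closedNbhd G Ci) (F Ci))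
    (H : SimpleGraph V)
    (hHE : H = cliqueOn ((partVerts W W1 ∪ partVerts W W2 ∪ partVerts W Wo)ᶜ) ⊔
      ⨆ Ci ∈ partComps G W W1 ∪ partComps G W W2 ∪
        (partComps G W Wo \ {D : Set V | IsCompOf G (nbhd G C) D}), F Ci) :
    IsTriOn (realization G C) (closedNbhd G C) H := by
  subst hHE
  set Ω := (partVerts W W1 ∪ partVerts W W2 ∪ partVerts W Wo)ᶜ
  have := hC.2.nontrivial
  have hcov := hW.exists_mem hG.preconnected
  have hcomp : ∀ D ∈ partComps G W W1 ∪ partComps G W W2 ∪ partComps G W Wo,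
      IsCompOf G Ω D := fun D hD => hW.isCompOf_compl_partVerts_union h12 h1o h2o hD
  have hΩo : Ω ⊆ (partVerts W Wo)ᶜ := Set.compl_subset_compl.mpr Set.subset_union_right
  have hoC : (partVerts W Wo)ᶜ ⊆ closedNbhd G C := hW.compl_partVerts_subset_closedNbhd
    (hpart.symm.subset.trans (Finset.union_subset_union_left hsub))
  have hNΩ : nbhd G C ⊆ Ω := hC'nb ▸ (hcomp C' (Or.inr hC'mem)).nbhd_subset
  obtain ⟨K, hK⟩ := hg1.2.1
  refine isTriOn_realization_cliqueOn_sup_iSup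
    (fun D hD => hcomp D (Set.union_subset_union_right _ Set.sdiff_subset hD)) hF hNΩ
    (hΩo.trans hoC) ?_ ?_
  · rintro D ((hD | hD) | ⟨hD, hDN⟩)
    · exact (subset_compl_partVerts_of_mem_partComps hcov h1o hD).trans hoC
    · exact (subset_compl_partVerts_of_mem_partComps hcov h2o hD).trans hoC
    · exact ((hC.1.subset_or_isCompOf hD (hNΩ.trans hΩo) (Set.compl_subset_comm.mp hoC)
        ).resolve_right hDN).trans Set.subset_union_left
  · intro u hu huΩ
    rcases Set.notMem_compl_iff.mp huΩ with (h | h) | h <;>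
      obtain ⟨D, hD, huD⟩ := exists_isCompOf_mem G (Set.notMem_compl_iff.mpr h)
    · exact ⟨D, Or.inl (Or.inl hD), huD⟩
    · exact ⟨D, Or.inl (Or.inr hD), huD⟩
    · exact ⟨D, Or.inr ⟨hD, not_isCompOf_nbhd_of_mem_partComps hC.1
        (hsub (Finset.mem_union_left _ hK)) (Finset.disjoint_left.mp h1o hK) hD hu huD⟩, huD⟩

/-- Soundness: any graph assembled from a partition `{W1, W2, Wo}` of the
edge clique cover into good parts (with `W1 ∪ W2 ⊆ W[C]` and a block `C' ∈ C(Wo)` with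
`N(C') = N(C)`) together with triangulations of the realizations of the smaller blocks is a
triangulation of `R(C)`. -/
theorem tri_realization_soundness {V : Type*} [Fintype V]
    (G : SimpleGraph V) (hG : G.Connected) (W : Finset (Set V)) (hW : IsECC G W)
    (C : Set V) (hC : IsBlock G C) (W1 W2 Wo : Finset (Set V))
    (hpart : W1 ∪ W2 ∪ Wo = W) (h12 : Disjoint W1 W2) (h1o : Disjoint W1 Wo)
    (h2o : Disjoint W2 Wo)
    (hg1 : IsGoodPart G W W1) (hg2 : IsGoodPart G W W2) (hgo : IsGoodPart G W Wo)
    (hsub : W1 ∪ W2 ⊆ meeting W C)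
    (C' : Set V) (hC'mem : C' ∈ partComps G W Wo) (hC'blk : IsBlock G C')
    (hC'nb : nbhd G C' = nbhd G C)
    (F : Set V → SimpleGraph V)
    (hF : ∀ Ci ∈ partComps G W W1 ∪ partComps G W W2 ∪
        (partComps G W Wo \ {D : Set V | IsCompOf G (nbhd G C) D}),
      IsTriOn (realization G Ci) (closedNbhd G Ci) (F Ci))
    (H : SimpleGraph V)
    (hHE : H = cliqueOn ((partVerts W W1 ∪ partVerts W W2 ∪ partVerts W Wo)ᶜ) ⊔
      ⨆ Ci ∈ partComps G W W1 ∪ partComps G W W2 ∪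
        (partComps G W Wo \ {D : Set V | IsCompOf G (nbhd G C) D}), F Ci) :
    IsTriOn (realization G C) (closedNbhd G C) H :=
  tri_realization_soundness_general G hG W hW C hC W1 W2 Wo hpart h12 h1o h2o hg1 hsub C' hC'mem
    hC'nb F hF H hHE

end PaperECC
end

section
/- For every positive integer k, let G be the graph on 2k vertices a_1,…,a_k, b_1,…,b_k in which A = {a_1,…,a_k} and B = {b_1,…,b_k} are cliques and the only further edges are the matching edges a_i b_i for 1 ≤ i ≤ k. Then {A, B} is a vertex clique cover of G of size 2, and G has at least 2^k − 2 minimal separators. -/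
open scoped Classical

namespace PaperECC

variable {V : Type*}

/-- Two disjoint cliques of size `k` joined by a perfect matching. -/
def matchedCliques (k : ℕ) : SimpleGraph (Fin k ⊕ Fin k) :=
  SimpleGraph.fromRel (fun a b =>
    (∃ i j : Fin k, a = Sum.inl i ∧ b = Sum.inl j) ∨
    (∃ i j : Fin k, a = Sum.inr i ∧ b = Sum.inr j) ∨
    (∃ i : Fin k, a = Sum.inl i ∧ b = Sum.inr i))

section Aux

variable {k : ℕ}

lemma mc_adj_inl_inl {i j : Fin k} :
    (matchedCliques k).Adj (Sum.inl i) (Sum.inl j) ↔ i ≠ j := by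
  simp [matchedCliques, SimpleGraph.fromRel_adj]

lemma mc_adj_inr_inr {i j : Fin k} :
    (matchedCliques k).Adj (Sum.inr i) (Sum.inr j) ↔ i ≠ j := by
  simp [matchedCliques, SimpleGraph.fromRel_adj]

lemma mc_adj_inl_inr {i j : Fin k} :
    (matchedCliques k).Adj (Sum.inl i) (Sum.inr j) ↔ i = j := by
  simp [matchedCliques, SimpleGraph.fromRel_adj]
  aesop

lemma mc_adj_inr_inl {i j : Fin k} :
    (matchedCliques k).Adj (Sum.inr i) (Sum.inl j) ↔ i = j := by
  simp [matchedCliques, SimpleGraph.fromRel_adj]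

lemma clique_induce_connected {V : Type*} (G : SimpleGraph V) {C : Set V}
    (h : G.IsClique C) (hne : C.Nonempty) : (G.induce C).Connected := by
  rw [SimpleGraph.connected_iff]
  refine ⟨fun u v => ?_, ⟨⟨hne.some, hne.some_mem⟩⟩⟩
  by_cases huv : (u : V) = v
  · rw [Subtype.ext huv]
  · exact SimpleGraph.Adj.reachable (by exact h u.2 v.2 huv)

/-- The separator associated to a subset `T ⊆ Fin k`. -/
def sepOf (k : ℕ) (T : Set (Fin k)) : Set (Fin k ⊕ Fin k) :=
  Sum.inl '' Tᶜ ∪ Sum.inr '' T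

lemma fullcomp_inl (T : Set (Fin k)) (hT : T.Nonempty) :
    IsFullCompOf (matchedCliques k) (sepOf k T) (Sum.inl '' T) := by
  refine ⟨⟨hT.image _, ?_, ?_, ?_⟩, ?_⟩
  · rw [sepOf, Set.disjoint_union_right]
    constructor
    · rw [Set.disjoint_iff_inter_eq_empty]
      ext x
      simp only [Set.mem_inter_iff, Set.mem_image, Set.mem_empty_iff_false, iff_false]
      rintro ⟨⟨i, hi, rfl⟩, j, hj, hij⟩
      exact hj (Sum.inl.inj hij ▸ hi)
    · rw [Set.disjoint_iff_inter_eq_empty]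
      ext x
      simp only [Set.mem_inter_iff, Set.mem_image, Set.mem_empty_iff_false, iff_false]
      rintro ⟨⟨i, hi, rfl⟩, j, hj, hij⟩
      exact Sum.inr_ne_inl hij
  · refine clique_induce_connected _ ?_ (hT.image _)
    rintro x ⟨i, hi, rfl⟩ y ⟨j, hj, rfl⟩ hxy
    exact mc_adj_inl_inl.2 (fun h => hxy (by rw [h]))
  · rintro u ⟨i, hi, rfl⟩ v hv hadj
    rcases v with j | j
    · refine ⟨j, ?_, rfl⟩
      by_contra hj
      exact hv (Or.inl ⟨j, hj, rfl⟩)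
    · exact absurd (Or.inr ⟨j, mc_adj_inl_inr.1 hadj ▸ hi, rfl⟩) hv
  · ext v
    simp only [nbhd, Set.mem_setOf_eq, sepOf, Set.mem_union, Set.mem_image]
    constructor
    · rintro ⟨hv, u, ⟨i, hi, rfl⟩, hadj⟩
      rcases v with j | j
      · refine Or.inl ⟨j, fun hj => hv ⟨j, hj, rfl⟩, rfl⟩
      · exact Or.inr ⟨j, (mc_adj_inl_inr.1 hadj) ▸ hi, rfl⟩
    · rintro (⟨j, hj, rfl⟩ | ⟨j, hj, rfl⟩)
      · obtain ⟨i, hi⟩ := hT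
        refine ⟨?_, Sum.inl i, ⟨i, hi, rfl⟩, mc_adj_inl_inl.2 ?_⟩
        · rintro ⟨m, hm, hmj⟩
          exact hj (Sum.inl.inj hmj ▸ hm)
        · rintro rfl; exact hj hi
      · refine ⟨?_, Sum.inl j, ⟨j, hj, rfl⟩, mc_adj_inl_inr.2 rfl⟩
        rintro ⟨m, _, hmj⟩
        exact Sum.inl_ne_inr hmj

lemma fullcomp_inr (T : Set (Fin k)) (hTc : Tᶜ.Nonempty) :
    IsFullCompOf (matchedCliques k) (sepOf k T) (Sum.inr '' Tᶜ) := by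
  refine ⟨⟨hTc.image _, ?_, ?_, ?_⟩, ?_⟩
  · rw [sepOf, Set.disjoint_union_right]
    constructor
    · rw [Set.disjoint_iff_inter_eq_empty]
      ext x
      simp only [Set.mem_inter_iff, Set.mem_image, Set.mem_empty_iff_false, iff_false]
      rintro ⟨⟨i, hi, rfl⟩, j, hj, hij⟩
      exact Sum.inl_ne_inr hij
    · rw [Set.disjoint_iff_inter_eq_empty]
      ext x
      simp only [Set.mem_inter_iff, Set.mem_image, Set.mem_empty_iff_false, iff_false]
      rintro ⟨⟨i, hi, rfl⟩, j, hj, hij⟩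
      exact hi (Sum.inr.inj hij ▸ hj)
  · refine clique_induce_connected _ ?_ (hTc.image _)
    rintro x ⟨i, hi, rfl⟩ y ⟨j, hj, rfl⟩ hxy
    exact mc_adj_inr_inr.2 (fun h => hxy (by rw [h]))
  · rintro u ⟨i, hi, rfl⟩ v hv hadj
    rcases v with j | j
    · exact absurd (Or.inl ⟨j, mc_adj_inr_inl.1 hadj ▸ hi, rfl⟩) hv
    · refine ⟨j, ?_, rfl⟩
      intro hj
      exact hv (Or.inr ⟨j, hj, rfl⟩)
  · ext v
    simp only [nbhd, Set.mem_setOf_eq, sepOf, Set.mem_union, Set.mem_image]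
    constructor
    · rintro ⟨hv, u, ⟨i, hi, rfl⟩, hadj⟩
      rcases v with j | j
      · exact Or.inl ⟨j, (mc_adj_inr_inl.1 hadj) ▸ hi, rfl⟩
      · refine Or.inr ⟨j, ?_, rfl⟩
        by_contra hj
        exact hv ⟨j, hj, rfl⟩
    · rintro (⟨j, hj, rfl⟩ | ⟨j, hj, rfl⟩)
      · refine ⟨?_, Sum.inr j, ⟨j, hj, rfl⟩, mc_adj_inr_inl.2 rfl⟩
        rintro ⟨m, _, hmj⟩
        exact Sum.inl_ne_inr hmj.symm
      · obtain ⟨i, hi⟩ := hTc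
        refine ⟨?_, Sum.inr i, ⟨i, hi, rfl⟩, mc_adj_inr_inr.2 ?_⟩
        · rintro ⟨m, hm, hmj⟩
          exact hm (Sum.inr.inj hmj ▸ hj)
        · rintro rfl; exact hi hj

lemma sepOf_injective (k : ℕ) : Function.Injective (sepOf k) := by
  intro T1 T2 h
  ext i
  have : ∀ T : Set (Fin k), Sum.inr i ∈ sepOf k T ↔ i ∈ T := by
    intro T
    simp only [sepOf, Set.mem_union, Set.mem_image]
    constructor
    · rintro (⟨j, _, hj⟩ | ⟨j, hj, hj'⟩)
      · exact absurd hj (Sum.inl_ne_inr)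
      · exact Sum.inr.inj hj' ▸ hj
    · intro hi; exact Or.inr ⟨i, hi, rfl⟩
  rw [← this T1, ← this T2, h]

lemma sepOf_isMinSep (T : Set (Fin k)) (hT : T.Nonempty) (hTc : Tᶜ.Nonempty) :
    IsMinSep (matchedCliques k) (sepOf k T) := by
  refine ⟨Sum.inl '' T, Sum.inr '' Tᶜ, ?_, fullcomp_inl T hT, fullcomp_inr T hTc⟩
  obtain ⟨i, hi⟩ := hT
  intro h
  have : Sum.inl i ∈ Sum.inr '' Tᶜ := h ▸ ⟨i, hi, rfl⟩
  obtain ⟨j, _, hj⟩ := this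
  exact Sum.inl_ne_inr hj.symm

end Aux

/-- The graph consisting of two cliques `A`, `B` of size `k` joined by a
perfect matching has `{A, B}` as a vertex clique cover of size 2 and at least `2 ^ k - 2`
minimal separators. -/
theorem matched_cliques_min_seps (k : ℕ) (hk : 1 ≤ k) :
    (matchedCliques k).IsClique (Set.range Sum.inl) ∧
    (matchedCliques k).IsClique (Set.range Sum.inr) ∧
    (Set.range Sum.inl ∪ Set.range Sum.inr : Set (Fin k ⊕ Fin k)) = Set.univ ∧
    ({Set.range Sum.inl, Set.range Sum.inr} : Set (Set (Fin k ⊕ Fin k))).ncard = 2 ∧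
    2 ^ k - 2 ≤ {S : Set (Fin k ⊕ Fin k) | IsMinSep (matchedCliques k) S}.ncard := by
  refine ⟨?_, ?_, ?_, ?_, ?_⟩
  · rintro x ⟨i, rfl⟩ y ⟨j, rfl⟩ hxy
    exact mc_adj_inl_inl.2 (fun h => hxy (by rw [h]))
  · rintro x ⟨i, rfl⟩ y ⟨j, rfl⟩ hxy
    exact mc_adj_inr_inr.2 (fun h => hxy (by rw [h]))
  · ext x
    rcases x with i | i <;> simp
  · refine Set.ncard_pair ?_
    intro h
    have : (Sum.inl (⟨0, hk⟩ : Fin k) : Fin k ⊕ Fin k) ∈ Set.range Sum.inr :=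
      h ▸ ⟨⟨0, hk⟩, rfl⟩
    obtain ⟨j, hj⟩ := this
    exact Sum.inl_ne_inr hj.symm
  · set S0 : Set (Set (Fin k)) := {T | T.Nonempty ∧ Tᶜ.Nonempty} with hS0
    have hsub : sepOf k '' S0 ⊆ {S : Set (Fin k ⊕ Fin k) | IsMinSep (matchedCliques k) S} := by
      rintro S ⟨T, ⟨hT, hTc⟩, rfl⟩
      exact sepOf_isMinSep T hT hTc
    have h1 : (sepOf k '' S0).ncard ≤
        {S : Set (Fin k ⊕ Fin k) | IsMinSep (matchedCliques k) S}.ncard :=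
      Set.ncard_le_ncard hsub (Set.toFinite _)
    have h2 : (sepOf k '' S0).ncard = S0.ncard :=
      Set.ncard_image_of_injective _ (sepOf_injective k)
    have h3 : S0 = Set.univ \ {∅, Set.univ} := by
      ext T
      simp only [hS0, Set.mem_setOf_eq, Set.mem_diff, Set.mem_univ, true_and,
        Set.mem_insert_iff, Set.mem_singleton_iff, not_or]
      rw [Set.nonempty_iff_ne_empty, Set.nonempty_compl]
    have h4 : S0.ncard = 2 ^ k - 2 := by
      rw [h3, Set.ncard_diff (Set.subset_univ _) (Set.toFinite _)]
      congr 1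
      · rw [Set.ncard_univ, Nat.card_eq_fintype_card, Fintype.card_set, Fintype.card_fin]
      · refine Set.ncard_pair ?_
        intro h
        have : (⟨0, hk⟩ : Fin k) ∈ (∅ : Set (Fin k)) := h ▸ Set.mem_univ _
        exact this
    omega

end PaperECC
end
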